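/- arXiv:1506.08414 — 5 statements merged into one kernel-verified Lean document; each statement's English description precedes it below -/
import Mathlib

section
/- The 6-point set X = {(1,0), (e^{2πi/3},0), (e^{4πi/3},0), (0,1), (0,e^{2πi/3}), (0,e^{4πi/3})} ⊂ ℂ² is a spherical 2-design on S³. -/
open MeasureTheory Complex

noncomputable section

/-- The unit sphere `S³ = {(a,b) ∈ ℂ² : |a|²+|b|² = 1}`. -/
def S3 : Set (ℂ × ℂ) := {p | ‖p.1‖ ^ 2 + ‖p.2‖ ^ 2 = 1}

/-- The unit sphere `S² = {(ξ,η) ∈ ℝ×ℂ : ξ²+|η|² = 1}`. -/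
def S2 : Set (ℝ × ℂ) := {p | p.1 ^ 2 + ‖p.2‖ ^ 2 = 1}

/-- The unit circle `S¹ ⊂ ℂ`. -/
def S1 : Set ℂ := {z | ‖z‖ = 1}

/-- The Hopf map `π(a,b) = (|a|²−|b|², 2ab)`. -/
def hopf (p : ℂ × ℂ) : ℝ × ℂ :=
  (‖p.1‖ ^ 2 - ‖p.2‖ ^ 2, 2 * p.1 * p.2)

/-- The right `S¹`-action on `S³`: `(a,b)·z = (az, b z̄)`. -/
def act (p : ℂ × ℂ) (z : ℂ) : ℂ × ℂ := (p.1 * z, p.2 * starRingEnd ℂ z)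

/-- Real coordinates on `ℂ² ≅ ℝ⁴`. -/
def coords4 (p : ℂ × ℂ) : Fin 4 → ℝ := ![p.1.re, p.1.im, p.2.re, p.2.im]

/-- Real coordinates on `ℝ×ℂ ≅ ℝ³`. -/
def coords3 (p : ℝ × ℂ) : Fin 3 → ℝ := ![p.1, p.2.re, p.2.im]

/-- Real coordinates on `ℂ ≅ ℝ²`. -/
def coords2 (z : ℂ) : Fin 2 → ℝ := ![z.re, z.im]

/-- Evaluation of a complex polynomial in 4 real variables at a point of `ℂ²`. -/
def polyFun4 (p : MvPolynomial (Fin 4) ℂ) (x : ℂ × ℂ) : ℂ :=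
  MvPolynomial.eval (fun i => ((coords4 x i : ℝ) : ℂ)) p

def polyFun3 (p : MvPolynomial (Fin 3) ℂ) (x : ℝ × ℂ) : ℂ :=
  MvPolynomial.eval (fun i => ((coords3 x i : ℝ) : ℂ)) p

def polyFun2 (p : MvPolynomial (Fin 2) ℂ) (x : ℂ) : ℂ :=
  MvPolynomial.eval (fun i => ((coords2 x i : ℝ) : ℂ)) p

/-- The spherical measure on `S³ ⊂ ℂ²`, obtained from the spherical measure on the
unit sphere of `ℝ⁴` via the standard identification. -/
def μS3 : Measure (ℂ × ℂ) :=
  ((volume : Measure (EuclideanSpace ℝ (Fin 4))).toSphere).map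
    (fun x => ((⟨x.1 0, x.1 1⟩, ⟨x.1 2, x.1 3⟩) : ℂ × ℂ))

/-- The spherical measure on `S² ⊂ ℝ×ℂ`. -/
def μS2 : Measure (ℝ × ℂ) :=
  ((volume : Measure (EuclideanSpace ℝ (Fin 3))).toSphere).map
    (fun x => ((x.1 0, ⟨x.1 1, x.1 2⟩) : ℝ × ℂ))

/-- The arc-length measure on `S¹ ⊂ ℂ`. -/
def μS1 : Measure ℂ :=
  ((volume : Measure ℂ).toSphere).map (fun z => (z.1 : ℂ))

/-- `X` is a spherical `t`-design with respect to the measure `μ` (supported on a sphere),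
where `c` gives the real coordinates: the average over `X` of every polynomial of total
degree at most `t` equals its average over the sphere. -/
def IsDesign {V : Type} [MeasurableSpace V] {n : ℕ} (c : V → Fin n → ℝ) (μ : Measure V) (t : ℕ)
    (X : Finset V) : Prop :=
  X.Nonempty ∧ ∀ p : MvPolynomial (Fin n) ℂ, p.totalDegree ≤ t →
    (∑ x ∈ X, MvPolynomial.eval (fun i => ((c x i : ℝ) : ℂ)) p) / (X.card : ℂ) =
      ⨍ x, MvPolynomial.eval (fun i => ((c x i : ℝ) : ℂ)) p ∂μ

/-- The normalization of a measure to a probability measure. -/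
def mnormalize {V : Type} [MeasurableSpace V] (μ : Measure V) : Measure V :=
  (μ Set.univ)⁻¹ • μ

/-- The `S¹`-invariant probability measure on the fiber of the Hopf map through `s ∈ S³`,
realized as the pushforward of the normalized arc-length measure under `z ↦ s·z`. -/
def μfiber (s : ℂ × ℂ) : Measure (ℂ × ℂ) :=
  (mnormalize μS1).map (act s)

/-!
Both sides of the design identity are linear in the polynomial, and a monomial of degree at most
two evaluates to `1`, `xᵢ` or `xᵢ xⱼ`. So a finite set is a spherical 2-design as soon as its first
and second moments agree with those of the sphere. On the unit sphere of `ℝⁿ` these are `0` and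
`δᵢⱼ / n`, because coordinate reflections and permutations preserve the spherical measure and
`∑ xᵢ² = 1`. For the six points, whose nonzero coordinate runs through the cube roots of unity
`1, ω, ω²`, the moments are `0` and `δᵢⱼ / 4` since `1 + ω + ω² = 0 = 1 + ω² + ω⁴`.
-/

open Metric Finset
open scoped BigOperators Pointwise

namespace Finsupp

theorem exists_eq_single_add_of_ne_zero {σ : Type*} {m : σ →₀ ℕ} (hm : m ≠ 0) :
    ∃ i m', m = single i 1 + m' := by
  obtain ⟨i, hi⟩ := support_nonempty_iff.2 hm
  have : single i 1 ≤ m := single_le_iff.2 (Nat.one_le_iff_ne_zero.2 (mem_support_iff.1 hi))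
  exact ⟨i, m - single i 1, (add_tsub_cancel_of_le this).symm⟩

theorem eq_zero_or_single_or_add_single_of_degree_le_two {σ : Type*} {m : σ →₀ ℕ}
    (hm : m.degree ≤ 2) :
    m = 0 ∨ (∃ i, m = single i 1) ∨ ∃ i j, m = single i 1 + single j 1 := by
  rcases eq_or_ne m 0 with rfl | h₀
  · exact .inl rfl
  obtain ⟨i, m', rfl⟩ := exists_eq_single_add_of_ne_zero h₀
  rcases eq_or_ne m' 0 with rfl | h₁
  · exact .inr (.inl ⟨i, add_zero _⟩)
  obtain ⟨j, m'', rfl⟩ := exists_eq_single_add_of_ne_zero h₁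
  obtain rfl : m'' = 0 := by
    rw [← degree_eq_zero_iff]
    simp only [map_add, degree_single] at hm
    omega
  exact .inr (.inr ⟨i, j, by rw [add_zero]⟩)

end Finsupp

namespace MeasureTheory

variable {α : Type*} [MeasurableSpace α] {μ : Measure α}

theorem average_finsetSum {ι E : Type*} [NormedAddCommGroup E] [NormedSpace ℝ E] (s : Finset ι)
    {f : ι → α → E} (hf : ∀ i ∈ s, Integrable (f i) μ) :
    ⨍ x, ∑ i ∈ s, f i x ∂μ = ∑ i ∈ s, ⨍ x, f i x ∂μ :=
  integral_finsetSum s fun i hi => (hf i hi).to_average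

theorem average_const_mul {L : Type*} [RCLike L] (r : L) (f : α → L) :
    ⨍ x, r * f x ∂μ = r * ⨍ x, f x ∂μ :=
  integral_const_mul r f

theorem average_complex_ofReal (f : α → ℝ) : ⨍ x, (f x : ℂ) ∂μ = ⨍ x, f x ∂μ :=
  integral_complex_ofReal

theorem average_map {β E : Type*} [MeasurableSpace β] [NormedAddCommGroup E] [NormedSpace ℝ E]
    {φ : α → β} (hφ : AEMeasurable φ μ)
    {f : β → E} (hf : AEStronglyMeasurable f (μ.map φ)) :
    ⨍ y, f y ∂μ.map φ = ⨍ x, f (φ x) ∂μ := by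
  rw [average_eq, average_eq, integral_map hφ hf, measureReal_def, measureReal_def,
    Measure.map_apply_of_aemeasurable hφ MeasurableSet.univ, Set.preimage_univ]

end MeasureTheory

open MvPolynomial in
theorem isDesign_two_of_moments {V : Type} [MeasurableSpace V] {n : ℕ} (c : V → Fin n → ℝ)
    (μ : Measure V) [IsFiniteMeasure μ] [NeZero μ] {X : Finset V} (hX : X.Nonempty)
    (hc₁ : ∀ i, Integrable (fun x => c x i) μ) (hc₂ : ∀ i j, Integrable (fun x => c x i * c x j) μ)
    (h₁ : ∀ i, 𝔼 x ∈ X, c x i = ⨍ x, c x i ∂μ)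
    (h₂ : ∀ i j, 𝔼 x ∈ X, c x i * c x j = ⨍ x, c x i * c x j ∂μ) :
    IsDesign c μ 2 X := by
  have hreal : ∀ r : V → ℝ, Integrable r μ → 𝔼 x ∈ X, r x = ⨍ x, r x ∂μ → ∀ a : ℂ,
      Integrable (fun x => a * r x) μ ∧ 𝔼 x ∈ X, a * r x = ⨍ x, a * r x ∂μ := by
    intro r hr hrX a
    refine ⟨hr.ofReal.const_mul a, ?_⟩
    rw [← mul_expect, average_const_mul, ← Complex.ofReal_expect, average_complex_ofReal, hrX]
  have hmonomial : ∀ m : Fin n →₀ ℕ, m.degree ≤ 2 → ∀ a : ℂ,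
      Integrable (fun x => eval (fun i => (c x i : ℂ)) (monomial m a)) μ ∧
      𝔼 x ∈ X, eval (fun i => (c x i : ℂ)) (monomial m a) =
        ⨍ x, eval (fun i => (c x i : ℂ)) (monomial m a) ∂μ := by
    intro m hm a
    rcases Finsupp.eq_zero_or_single_or_add_single_of_degree_le_two hm
      with rfl | ⟨i, rfl⟩ | ⟨i, j, rfl⟩
    · simpa using hreal (fun _ => 1) (integrable_const 1) (by simp [hX, average_const]) a
    · simpa [← C_mul_X_eq_monomial] using hreal _ (hc₁ i) (h₁ i) a
    · simpa [monomial_add_single, ← C_mul_X_eq_monomial, mul_assoc]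
        using hreal _ (hc₂ i j) (h₂ i j) a
  refine ⟨hX, fun p hp => ?_⟩
  have hdeg : ∀ m ∈ p.support, m.degree ≤ 2 :=
    fun m hm => (le_totalDegree hm).trans hp
  rw [← expect_eq_sum_div_card, p.as_sum]
  simp only [map_sum]
  rw [expect_sum_comm, average_finsetSum _ fun m hm => (hmonomial m (hdeg m hm) _).1]
  exact sum_congr rfl fun m hm => (hmonomial m (hdeg m hm) _).2

namespace LinearIsometryEquiv

variable {E : Type*} [NormedAddCommGroup E] [NormedSpace ℝ E]

def restrictUnitSphere (e : E ≃ₗᵢ[ℝ] E) : sphere (0 : E) 1 ≃ₜ sphere (0 : E) 1 :=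
  e.toHomeomorph.subtype fun x => by simp

@[simp]
theorem coe_restrictUnitSphere (e : E ≃ₗᵢ[ℝ] E) (x : sphere (0 : E) 1) :
    (e.restrictUnitSphere x : E) = e x :=
  rfl

end LinearIsometryEquiv

namespace MeasureTheory.Measure

variable {E : Type*} [NormedAddCommGroup E] [NormedSpace ℝ E] [MeasurableSpace E] [BorelSpace E]

theorem measurePreserving_restrictUnitSphere {μ : Measure E} {e : E ≃ₗᵢ[ℝ] E}
    (he : MeasurePreserving e μ μ) :
    MeasurePreserving e.restrictUnitSphere μ.toSphere μ.toSphere := by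
  refine ⟨e.restrictUnitSphere.continuous.measurable, ?_⟩
  ext s hs
  have hs' := e.restrictUnitSphere.continuous.measurable hs
  rw [map_apply e.restrictUnitSphere.continuous.measurable hs, toSphere_apply' _ hs',
    toSphere_apply' _ hs]
  have : Set.Ioo (0 : ℝ) 1 • ((↑) '' (e.restrictUnitSphere ⁻¹' s) : Set E) =
      e ⁻¹' (Set.Ioo (0 : ℝ) 1 • ((↑) '' s)) := by
    ext x
    simp only [Set.mem_smul, Set.mem_image, Set.mem_preimage]
    constructor
    · rintro ⟨r, hr, _, ⟨y, hy, rfl⟩, rfl⟩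
      exact ⟨r, hr, _, ⟨_, hy, rfl⟩, by simp⟩
    · rintro ⟨r, hr, _, ⟨y, hy, rfl⟩, hx⟩
      refine ⟨r, hr, _, ⟨e.restrictUnitSphere.symm y, by simpa using hy, rfl⟩, e.injective ?_⟩
      rw [← hx, map_smul, ← e.coe_restrictUnitSphere, Homeomorph.apply_symm_apply]
  rw [this, he.measure_preimage_emb e.toHomeomorph.measurableEmbedding]

instance toSphere.neZero [FiniteDimensional ℝ E] [Nontrivial E] (μ : Measure E)
    [μ.IsAddHaarMeasure] : NeZero μ.toSphere :=
  ⟨toSphere_ne_zero μ⟩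

theorem integrable_toSphere_of_continuous [FiniteDimensional ℝ E] (μ : Measure E)
    [μ.IsAddHaarMeasure] {F : Type*} [NormedAddCommGroup F] {f : sphere (0 : E) 1 → F}
    (hf : Continuous f) : Integrable f μ.toSphere :=
  hf.integrable_of_hasCompactSupport (HasCompactSupport.of_compactSpace f)

theorem average_comp_restrictUnitSphere {F : Type*} [NormedAddCommGroup F] [NormedSpace ℝ F]
    {μ : Measure E} {e : E ≃ₗᵢ[ℝ] E} (he : MeasurePreserving e μ μ)
    (f : sphere (0 : E) 1 → F) :
    ⨍ x, f (e.restrictUnitSphere x) ∂μ.toSphere = ⨍ x, f x ∂μ.toSphere := by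
  rw [average_eq, average_eq, (measurePreserving_restrictUnitSphere he).integral_comp
    e.restrictUnitSphere.measurableEmbedding]

end MeasureTheory.Measure

namespace EuclideanSpace

variable {ι : Type*} [Fintype ι]

def reflectCoord [DecidableEq ι] (i : ι) : EuclideanSpace ℝ ι ≃ₗᵢ[ℝ] EuclideanSpace ℝ ι :=
  LinearIsometryEquiv.piLpCongrRight 2 fun k =>
    if k = i then LinearIsometryEquiv.neg ℝ else LinearIsometryEquiv.refl ℝ ℝ

@[simp]
theorem reflectCoord_apply [DecidableEq ι] (i k : ι) (x : EuclideanSpace ℝ ι) :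
    reflectCoord i x k = if k = i then -x k else x k := by
  by_cases h : k = i <;> simp [reflectCoord, h]

theorem average_apply_toSphere (i : ι) :
    ⨍ y, y.1 i ∂(volume : Measure (EuclideanSpace ℝ ι)).toSphere = 0 := by
  classical
  have h := Measure.average_comp_restrictUnitSphere (reflectCoord i).measurePreserving
    fun y => y.1 i
  simp only [LinearIsometryEquiv.coe_restrictUnitSphere, reflectCoord_apply, ↓reduceIte,
    average_neg] at h
  linarith

theorem average_apply_mul_apply_toSphere_of_ne {i j : ι} (hij : i ≠ j) :
    ⨍ y, y.1 i * y.1 j ∂(volume : Measure (EuclideanSpace ℝ ι)).toSphere = 0 := by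
  classical
  have h := Measure.average_comp_restrictUnitSphere (reflectCoord i).measurePreserving
    fun y => y.1 i * y.1 j
  simp only [LinearIsometryEquiv.coe_restrictUnitSphere, reflectCoord_apply, ↓reduceIte,
    if_neg hij.symm, neg_mul, average_neg] at h
  linarith

theorem average_apply_sq_toSphere (i : ι) :
    ⨍ y, y.1 i ^ 2 ∂(volume : Measure (EuclideanSpace ℝ ι)).toSphere = (Fintype.card ι : ℝ)⁻¹ := by
  classical
  have hswap : ∀ k, ⨍ y, y.1 k ^ 2 ∂(volume : Measure (EuclideanSpace ℝ ι)).toSphere =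
      ⨍ y, y.1 i ^ 2 ∂(volume : Measure (EuclideanSpace ℝ ι)).toSphere := fun k => by
    simpa using Measure.average_comp_restrictUnitSphere
      (LinearIsometryEquiv.piLpCongrLeft 2 ℝ ℝ (Equiv.swap i k)).measurePreserving
      fun y => y.1 i ^ 2
  have hsum : ∑ k, ⨍ y, y.1 k ^ 2 ∂(volume : Measure (EuclideanSpace ℝ ι)).toSphere = 1 := by
    have : Nonempty ι := ⟨i⟩
    rw [← average_finsetSum _ fun k _ =>
      Measure.integrable_toSphere_of_continuous _ (by fun_prop)]
    simp only [← EuclideanSpace.real_norm_sq_eq, norm_eq_of_mem_sphere, one_pow]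
    exact average_const _ _
  simp only [hswap, sum_const, card_univ, nsmul_eq_mul] at hsum
  exact eq_inv_of_mul_eq_one_right hsum

theorem average_apply_mul_apply_toSphere [DecidableEq ι] (i j : ι) :
    ⨍ y, y.1 i * y.1 j ∂(volume : Measure (EuclideanSpace ℝ ι)).toSphere =
      if i = j then (Fintype.card ι : ℝ)⁻¹ else 0 := by
  split_ifs with hij
  · subst hij
    simpa only [sq] using average_apply_sq_toSphere i
  · exact average_apply_mul_apply_toSphere_of_ne hij

end EuclideanSpace

def euclideanToC2 (x : EuclideanSpace ℝ (Fin 4)) : ℂ × ℂ := (⟨x 0, x 1⟩, ⟨x 2, x 3⟩)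

theorem continuous_euclideanToC2 : Continuous euclideanToC2 := by
  have hmk : Continuous fun p : ℝ × ℝ => (⟨p.1, p.2⟩ : ℂ) :=
    Complex.equivRealProdCLM.symm.continuous
  exact (hmk.comp (f := fun x : EuclideanSpace ℝ (Fin 4) => (x 0, x 1)) (by fun_prop)).prodMk
    (hmk.comp (f := fun x : EuclideanSpace ℝ (Fin 4) => (x 2, x 3)) (by fun_prop))

theorem coords4_euclideanToC2 (x : EuclideanSpace ℝ (Fin 4)) :
    coords4 (euclideanToC2 x) = x.ofLp := by
  ext i; fin_cases i <;> rfl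

theorem continuous_coords4 : Continuous coords4 := by
  unfold coords4
  fun_prop

theorem μS3_eq_map : μS3 = (volume : Measure (EuclideanSpace ℝ (Fin 4))).toSphere.map
    (euclideanToC2 ∘ Subtype.val) := rfl

instance : IsFiniteMeasure μS3 := by
  rw [μS3_eq_map]; infer_instance

instance : NeZero μS3 := ⟨by
  rw [μS3_eq_map, Measure.map_ne_zero_iff
    (continuous_euclideanToC2.comp continuous_subtype_val).aemeasurable]
  exact NeZero.ne _⟩

theorem integrable_comp_coords4_μS3 {g : (Fin 4 → ℝ) → ℝ} (hg : Continuous g) :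
    Integrable (fun x => g (coords4 x)) μS3 := by
  rw [μS3_eq_map, integrable_map_measure (g := fun x => g (coords4 x))
    (hg.comp continuous_coords4).aestronglyMeasurable
    (continuous_euclideanToC2.comp continuous_subtype_val).aemeasurable]
  exact Measure.integrable_toSphere_of_continuous _ (by
    simpa [Function.comp_def, coords4_euclideanToC2] using hg.comp (by fun_prop))

theorem average_comp_coords4_μS3 {g : (Fin 4 → ℝ) → ℝ} (hg : Continuous g) :
    ⨍ x, g (coords4 x) ∂μS3 =
      ⨍ y, g y.1.ofLp ∂(volume : Measure (EuclideanSpace ℝ (Fin 4))).toSphere := by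
  rw [μS3_eq_map, average_map (continuous_euclideanToC2.comp continuous_subtype_val).aemeasurable
    (f := fun x => g (coords4 x)) (hg.comp continuous_coords4).aestronglyMeasurable]
  simp only [Function.comp_apply, coords4_euclideanToC2]

theorem average_coords4_μS3 (i : Fin 4) : ⨍ x, coords4 x i ∂μS3 = 0 := by
  rw [average_comp_coords4_μS3 (continuous_apply i), EuclideanSpace.average_apply_toSphere]

theorem average_coords4_mul_μS3 (i j : Fin 4) :
    ⨍ x, coords4 x i * coords4 x j ∂μS3 = if i = j then (4 : ℝ)⁻¹ else 0 := by
  rw [average_comp_coords4_μS3 (g := fun v => v i * v j) (by fun_prop),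
    EuclideanSpace.average_apply_mul_apply_toSphere, Fintype.card_fin, Nat.cast_ofNat]

theorem Complex.exp_two_pi_I_div_three :
    Complex.exp (2 * Real.pi * Complex.I / 3) = ⟨-1 / 2, √3 / 2⟩ := by
  have : 2 * (Real.pi : ℂ) * Complex.I / 3 = ((Real.pi - Real.pi / 3 : ℝ) : ℂ) * Complex.I := by
    push_cast; ring
  rw [this, Complex.exp_ofReal_mul_I, Complex.ext_iff]
  simp [Real.cos_pi_sub, Real.sin_pi_sub, Real.cos_pi_div_three, Real.sin_pi_div_three]
  norm_num

theorem Complex.exp_four_pi_I_div_three :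
    Complex.exp (4 * Real.pi * Complex.I / 3) = ⟨-1 / 2, -(√3 / 2)⟩ := by
  have : 4 * (Real.pi : ℂ) * Complex.I / 3 =
      ((Real.pi / 3 - Real.pi : ℝ) : ℂ) * Complex.I + 2 * Real.pi * Complex.I := by
    push_cast; ring
  rw [this, Complex.exp_add, Complex.exp_two_pi_mul_I, mul_one, Complex.exp_ofReal_mul_I,
    Complex.ext_iff]
  simp [Real.cos_sub_pi, Real.sin_sub_pi, Real.cos_pi_div_three, Real.sin_pi_div_three]
  norm_num

def sixPoints : Finset (ℂ × ℂ) :=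
  {(1, 0), (⟨-1 / 2, √3 / 2⟩, 0), (⟨-1 / 2, -(√3 / 2)⟩, 0),
    (0, 1), (0, ⟨-1 / 2, √3 / 2⟩), (0, ⟨-1 / 2, -(√3 / 2)⟩)}

theorem sum_sixPoints {M : Type*} [AddCommMonoid M] (f : ℂ × ℂ → M) :
    ∑ x ∈ sixPoints, f x = f (1, 0) + f (⟨-1 / 2, √3 / 2⟩, 0) + f (⟨-1 / 2, -(√3 / 2)⟩, 0) +
      f (0, 1) + f (0, ⟨-1 / 2, √3 / 2⟩) + f (0, ⟨-1 / 2, -(√3 / 2)⟩) := by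
  have hne : √3 / 2 ≠ -(√3 / 2) := by
    have : 0 < √3 := by positivity
    intro h; linarith
  rw [sixPoints, sum_insert, sum_insert, sum_insert, sum_insert, sum_insert, sum_singleton]
  · simp only [add_assoc]
  all_goals norm_num [Prod.ext_iff, Complex.ext_iff, hne]

theorem card_sixPoints : #sixPoints = 6 := by
  simp only [card_eq_sum_ones, sum_sixPoints]

theorem expect_coords4_sixPoints (i : Fin 4) : 𝔼 x ∈ sixPoints, coords4 x i = 0 := by
  rw [expect_eq_sum_div_card, sum_sixPoints, card_sixPoints]
  fin_cases i <;> simp [coords4] <;> ring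

theorem expect_coords4_mul_sixPoints (i j : Fin 4) :
    𝔼 x ∈ sixPoints, coords4 x i * coords4 x j = if i = j then (4 : ℝ)⁻¹ else 0 := by
  have h3 : √3 * √3 = 3 := Real.mul_self_sqrt (by norm_num)
  rw [expect_eq_sum_div_card, sum_sixPoints, card_sixPoints]
  fin_cases i <;> fin_cases j <;> norm_num [coords4] <;> linear_combination h3 / 12

theorem coe_sixPoints_subset_S3 : (sixPoints : Set (ℂ × ℂ)) ⊆ S3 := by
  have h3 : √3 * √3 = 3 := Real.mul_self_sqrt (by norm_num)
  simp only [sixPoints, coe_insert, coe_singleton, Set.insert_subset_iff,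
    Set.singleton_subset_iff, S3, Set.mem_ofPred_eq, Complex.sq_norm, Complex.normSq_mk]
  norm_num
  linear_combination h3 / 4

/-- The explicit 6-point subset of `S³` obtained from the antipodal
1-design on `S²` and the regular 3-gon is a spherical 2-design on `S³`. -/
theorem six_point_two_design (X : Finset (ℂ × ℂ))
    (hX : ↑X = ({((1 : ℂ), (0 : ℂ)),
        (Complex.exp (2 * Real.pi * Complex.I / 3), 0),
        (Complex.exp (4 * Real.pi * Complex.I / 3), 0),
        (0, 1),
        (0, Complex.exp (2 * Real.pi * Complex.I / 3)),
        (0, Complex.exp (4 * Real.pi * Complex.I / 3))} : Set (ℂ × ℂ))) :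
    ↑X ⊆ S3 ∧ IsDesign coords4 μS3 2 X := by
  obtain rfl : X = sixPoints := by
    apply coe_injective
    rw [hX, exp_two_pi_I_div_three, exp_four_pi_I_div_three, sixPoints]
    push_cast
    rfl
  refine ⟨coe_sixPoints_subset_S3,
    isDesign_two_of_moments coords4 μS3 ⟨(1, 0), by simp [sixPoints]⟩
    (fun i => integrable_comp_coords4_μS3 (continuous_apply i))
    (fun i j => integrable_comp_coords4_μS3 (g := fun v => v i * v j) (by fun_prop))
    (fun i => ?_) (fun i j => ?_)⟩
  · rw [expect_coords4_sixPoints, average_coords4_μS3]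
  · rw [expect_coords4_mul_sixPoints, average_coords4_mul_μS3]

end
end

section
/- With the hypotheses of the weighted lifting lemma applied to every f in a finite-dimensional space 𝓗 of integrable functions on Ω₁ all satisfying the Fubini property: if (Y,λ_Y) is a weighted (I_π 𝓗)-design on (Ω₂,μ₂) and each (Γ_y, λ_{Γ_y}) is a weighted 𝓗|_{π⁻¹(y)}-design on (π⁻¹(y),μ_y), then (X, λ_X) with X = ⊔_y Γ_y, λ_X(x) = λ_Y(y)λ_{Γ_y}(x), is a weighted 𝓗-design on (Ω₁,μ₁). -/
open MeasureTheory

/-! Since the finite sets `Γ y` lie in distinct fibres of `π`, they are pairwise disjoint, so the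
`lX`-weighted sum over `X` splits into `lY`-weighted sums of the fibre designs. Each fibre design
turns its sum into the fibre integral `I_π f y`, the design `Y` turns the resulting sum into
`∫ I_π f dμ₂`, and Fubini identifies this with `∫ f dμ₁`. -/

theorem Finset.pairwiseDisjoint_of_subset_fiber {α β : Type*} {π : α → β} {Y : Finset β}
    {Γ : β → Finset α} (hΓ : ∀ y ∈ Y, ↑(Γ y) ⊆ π ⁻¹' {y}) :
    (Y : Set β).PairwiseDisjoint Γ := by
  intro y₁ hy₁ y₂ hy₂ hne
  refine Finset.disjoint_left.mpr fun x hx₁ hx₂ => hne ?_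
  exact (hΓ y₁ hy₁ hx₁).symm.trans (hΓ y₂ hy₂ hx₂)

theorem Finset.sum_biUnion_fiber_mul {α β M : Type*} [DecidableEq α] [CommSemiring M]
    {π : α → β} {Y : Finset β} {Γ : β → Finset α} (hΓ : ∀ y ∈ Y, ↑(Γ y) ⊆ π ⁻¹' {y})
    (w : β → M) (v : β → α → M) (u : α → M) (hu : ∀ y ∈ Y, ∀ x ∈ Γ y, u x = w y * v y x)
    (g : α → M) :
    ∑ x ∈ Y.biUnion Γ, u x * g x = ∑ y ∈ Y, w y * ∑ x ∈ Γ y, v y x * g x := by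
  rw [Finset.sum_biUnion (Finset.pairwiseDisjoint_of_subset_fiber hΓ)]
  refine Finset.sum_congr rfl fun y hy => ?_
  rw [Finset.mul_sum]
  refine Finset.sum_congr rfl fun x hx => ?_
  rw [hu y hy x hx, mul_assoc]

theorem weighted_lift_space_general {Ω₁ Ω₂ : Type*} [MeasurableSpace Ω₁] [MeasurableSpace Ω₂]
    [DecidableEq Ω₁]
    (μ₁ : Measure Ω₁) (μ₂ : Measure Ω₂)
    (π : Ω₁ → Ω₂) (μf : Ω₂ → Measure Ω₁)
    (H : Submodule ℂ (Ω₁ → ℂ))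
    (hFubini : ∀ f ∈ H, ∫ x, f x ∂μ₁ = ∫ ω, ∫ x, f x ∂(μf ω) ∂μ₂)
    (Y : Finset Ω₂) (lY : Ω₂ → ℝ)
    (hYdes : ∀ f ∈ H, ∑ y ∈ Y, (lY y : ℂ) * ∫ x, f x ∂(μf y) =
      ∫ ω, ∫ x, f x ∂(μf ω) ∂μ₂)
    (Γ : Ω₂ → Finset Ω₁) (hΓfib : ∀ y ∈ Y, ↑(Γ y) ⊆ π ⁻¹' {y})
    (lΓ : Ω₂ → Ω₁ → ℝ)
    (hΓdes : ∀ f ∈ H, ∀ y ∈ Y, ∑ x ∈ Γ y, (lΓ y x : ℂ) * f x = ∫ x, f x ∂(μf y))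
    (X : Finset Ω₁) (hX : X = Y.biUnion Γ)
    (lX : Ω₁ → ℝ) (hlX : ∀ y ∈ Y, ∀ x ∈ Γ y, lX x = lY y * lΓ y x) :
    ∀ f ∈ H, ∑ x ∈ X, (lX x : ℂ) * f x = ∫ x, f x ∂μ₁ := by
  intro f hf
  have hlXℂ : ∀ y ∈ Y, ∀ x ∈ Γ y, (lX x : ℂ) = lY y * lΓ y x := fun y hy x hx => by
    rw [hlX y hy x hx, Complex.ofReal_mul]
  rw [hX, Finset.sum_biUnion_fiber_mul hΓfib _ _ _ hlXℂ, hFubini f hf, ← hYdes f hf]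
  exact Finset.sum_congr rfl fun y hy => by rw [hΓdes f hf y hy]

/-- weighted lifting for a finite-dimensional space `𝓗` of functions.
If every `f ∈ 𝓗` satisfies the Fubini property, `(Y, lY)` is a weighted `I_π 𝓗`-design on
`(Ω₂, μ₂)` and each `(Γ y, lΓ y)` is a weighted `𝓗|_{π⁻¹(y)}`-design on the fiber, then
`(X, lX)` with `X = ⊔_y Γ y`, `lX x = lY y · lΓ y x`, is a weighted `𝓗`-design on
`(Ω₁, μ₁)`. -/
theorem weighted_lift_space {Ω₁ Ω₂ : Type*} [MeasurableSpace Ω₁] [MeasurableSpace Ω₂]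
    [DecidableEq Ω₁]
    (μ₁ : Measure Ω₁) (μ₂ : Measure Ω₂) [IsFiniteMeasure μ₁] [IsFiniteMeasure μ₂]
    (π : Ω₁ → Ω₂) (μf : Ω₂ → Measure Ω₁)
    (hμfsupp : ∀ ω, μf ω ((π ⁻¹' {ω})ᶜ) = 0)
    (H : Submodule ℂ (Ω₁ → ℂ)) [FiniteDimensional ℂ H]
    (hint : ∀ f ∈ H, Integrable f μ₁)
    (hfib : ∀ f ∈ H, ∀ ω, Integrable f (μf ω))
    (hIπint : ∀ f ∈ H, Integrable (fun ω => ∫ x, f x ∂(μf ω)) μ₂)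
    (hFubini : ∀ f ∈ H, ∫ x, f x ∂μ₁ = ∫ ω, ∫ x, f x ∂(μf ω) ∂μ₂)
    (Y : Finset Ω₂) (lY : Ω₂ → ℝ) (hlY : ∀ y ∈ Y, 0 < lY y)
    (hYdes : ∀ f ∈ H, ∑ y ∈ Y, (lY y : ℂ) * ∫ x, f x ∂(μf y) =
      ∫ ω, ∫ x, f x ∂(μf ω) ∂μ₂)
    (Γ : Ω₂ → Finset Ω₁) (hΓfib : ∀ y ∈ Y, ↑(Γ y) ⊆ π ⁻¹' {y})
    (lΓ : Ω₂ → Ω₁ → ℝ) (hlΓ : ∀ y ∈ Y, ∀ x ∈ Γ y, 0 < lΓ y x)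
    (hΓdes : ∀ f ∈ H, ∀ y ∈ Y, ∑ x ∈ Γ y, (lΓ y x : ℂ) * f x = ∫ x, f x ∂(μf y))
    (X : Finset Ω₁) (hX : X = Y.biUnion Γ)
    (lX : Ω₁ → ℝ) (hlX : ∀ y ∈ Y, ∀ x ∈ Γ y, lX x = lY y * lΓ y x) :
    ∀ f ∈ H, ∑ x ∈ X, (lX x : ℂ) * f x = ∫ x, f x ∂μ₁ :=
  weighted_lift_space_general μ₁ μ₂ π μf H hFubini Y lY hYdes Γ hΓfib lΓ hΓdes X hX lX hlX
end

section
/- For y = (ξ,η) ∈ S² with ξ ≠ −1, the fiber of the Hopf map is π⁻¹(y) = { (√((1+ξ)/2) · z, (1/√(2(1+ξ))) · η z̄ ) : z ∈ S¹ }. -/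
/-! The fibres of the Hopf map are the orbits of the circle action `act`, which preserves `S³`
and `hopf`. Conversely, if `hopf p = hopf p₀` on `S³` with `p₀.1 ≠ 0`, then `‖p.1‖ = ‖p₀.1‖`,
so `z = p.1 / p₀.1` lies on `S¹`, and `p.1 p.2 = p₀.1 p₀.2` forces `p.2 = p₀.2 z̄`. The
parametrisation in the theorem is the orbit of `(r, η / (2r))`. -/

open MeasureTheory Complex

noncomputable section

theorem mul_conj_eq_one_of_mem_S1 {z : ℂ} (hz : z ∈ S1) : z * starRingEnd ℂ z = 1 := by
  rw [Complex.mul_conj, Complex.normSq_eq_norm_sq, hz]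
  norm_num

theorem hopf_act (p : ℂ × ℂ) {z : ℂ} (hz : z ∈ S1) : hopf (act p z) = hopf p := by
  have hz' : ‖z‖ = 1 := hz
  simp only [hopf, act, norm_mul, Complex.norm_conj, hz', mul_one, Prod.mk.injEq, true_and]
  linear_combination 2 * p.1 * p.2 * mul_conj_eq_one_of_mem_S1 hz

theorem act_mem_S3 {p : ℂ × ℂ} (hp : p ∈ S3) {z : ℂ} (hz : z ∈ S1) : act p z ∈ S3 := by
  have hz' : ‖z‖ = 1 := hz
  simpa only [S3, act, Set.mem_ofPred_eq, norm_mul, Complex.norm_conj, hz', mul_one] using hp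

theorem mem_act_image_S1_of_hopf_eq {p p₀ : ℂ × ℂ} (hp : p ∈ S3) (hp₀ : p₀ ∈ S3)
    (h₀ : p₀.1 ≠ 0) (h : hopf p = hopf p₀) : p ∈ act p₀ '' S1 := by
  obtain ⟨a, b⟩ := p
  obtain ⟨a₀, b₀⟩ := p₀
  simp only [S3, Set.mem_ofPred_eq] at hp hp₀
  simp only [hopf, Prod.mk.injEq] at h
  obtain ⟨h_re, h_prod⟩ := h
  have h_norm : ‖a‖ = ‖a₀‖ := by
    nlinarith [norm_nonneg a, norm_nonneg a₀]
  have hz : a / a₀ ∈ S1 := by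
    simp [S1, h_norm, h₀]
  refine ⟨a / a₀, hz, ?_⟩
  have ha : a₀ * (a / a₀) = a := mul_div_cancel₀ a h₀
  have hab : a * b = a₀ * b₀ := by linear_combination h_prod / 2
  have hzb : a / a₀ * b = b₀ := by rw [div_mul_eq_mul_div, hab, mul_div_cancel_left₀ _ h₀]
  simp only [act, Prod.mk.injEq]
  refine ⟨ha, ?_⟩
  linear_combination b * mul_conj_eq_one_of_mem_S1 hz - starRingEnd ℂ (a / a₀) * hzb

theorem hopf_fiber_eq_act_image_S1 {p₀ : ℂ × ℂ} (hp₀ : p₀ ∈ S3) (h₀ : p₀.1 ≠ 0) :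
    {p ∈ S3 | hopf p = hopf p₀} = act p₀ '' S1 := by
  ext p
  constructor
  · rintro ⟨hp, h⟩
    exact mem_act_image_S1_of_hopf_eq hp hp₀ h₀ h
  · rintro ⟨z, hz, rfl⟩
    exact ⟨act_mem_S3 hp₀ hz, hopf_act p₀ hz⟩

theorem one_add_pos_of_mem_S2 {ξ : ℝ} {η : ℂ} (hy : (ξ, η) ∈ S2) (hξ : ξ ≠ -1) :
    0 < 1 + ξ := by
  have hy' : ξ ^ 2 + ‖η‖ ^ 2 = 1 := hy
  have : -1 ≤ ξ := by nlinarith [sq_nonneg ‖η‖]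
  exact neg_lt_iff_pos_add'.mp (lt_of_le_of_ne this hξ.symm)

/-- For `r = √((1 + ξ)/2)` this is a section of the Hopf map over `S² \ {(-1, 0)}`. -/
def hopfSection (r : ℝ) (η : ℂ) : ℂ × ℂ := ((r : ℂ), ((2 * r : ℝ) : ℂ)⁻¹ * η)

section hopfSection

variable {ξ r : ℝ} {η : ℂ}

theorem norm_sq_hopfSection_snd (hy : (ξ, η) ∈ S2) (hr : 0 < r) (hr2 : 2 * r ^ 2 = 1 + ξ) :
    ‖(hopfSection r η).2‖ ^ 2 = (1 - ξ) / 2 := by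
  have hy' : ξ ^ 2 + ‖η‖ ^ 2 = 1 := hy
  simp only [hopfSection, norm_mul, norm_inv, Complex.norm_real,
    Real.norm_of_nonneg (by positivity : (0 : ℝ) ≤ 2 * r)]
  field_simp
  nlinarith

theorem hopfSection_mem_S3 (hy : (ξ, η) ∈ S2) (hr : 0 < r) (hr2 : 2 * r ^ 2 = 1 + ξ) :
    hopfSection r η ∈ S3 := by
  have h₂ := norm_sq_hopfSection_snd hy hr hr2
  show ‖(r : ℂ)‖ ^ 2 + ‖(hopfSection r η).2‖ ^ 2 = 1
  rw [h₂, Complex.norm_real, Real.norm_of_nonneg hr.le]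
  linarith

theorem hopf_hopfSection (hy : (ξ, η) ∈ S2) (hr : 0 < r) (hr2 : 2 * r ^ 2 = 1 + ξ) :
    hopf (hopfSection r η) = (ξ, η) := by
  have h₂ := norm_sq_hopfSection_snd hy hr hr2
  have hr0 : (r : ℂ) ≠ 0 := by exact_mod_cast hr.ne'
  simp only [hopf, Prod.mk.injEq]
  constructor
  · rw [h₂, hopfSection, Complex.norm_real, Real.norm_of_nonneg hr.le]
    linarith
  · simp only [hopfSection]
    push_cast
    field_simp

end hopfSection

/-- For `y = (ξ,η) ∈ S²` with `ξ ≠ −1`, the fiber of the Hopf map is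
`π⁻¹(y) = {(√((1+ξ)/2)·z, (1/√(2(1+ξ)))·η z̄) : z ∈ S¹}`. -/
theorem hopf_fiber_plus (ξ : ℝ) (η : ℂ) (hy : (ξ, η) ∈ S2) (hξ : ξ ≠ -1) :
    {p ∈ S3 | hopf p = (ξ, η)} =
      (fun z : ℂ => (((Real.sqrt ((1 + ξ) / 2) : ℝ) : ℂ) * z,
        (((Real.sqrt (2 * (1 + ξ)) : ℝ) : ℂ))⁻¹ * η * starRingEnd ℂ z)) '' S1 := by
  set r := Real.sqrt ((1 + ξ) / 2)
  have hξ' := one_add_pos_of_mem_S2 hy hξ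
  have hr : 0 < r := Real.sqrt_pos.mpr (by positivity)
  have hr2 : 2 * r ^ 2 = 1 + ξ := by
    rw [Real.sq_sqrt (by positivity)]
    ring
  have h_sqrt : Real.sqrt (2 * (1 + ξ)) = 2 * r := by
    rw [show 2 * (1 + ξ) = 2 ^ 2 * ((1 + ξ) / 2) by ring, Real.sqrt_mul (by norm_num),
      Real.sqrt_sq (by norm_num)]
  have h_act : (fun z : ℂ => ((r : ℂ) * z,
      (((Real.sqrt (2 * (1 + ξ)) : ℝ) : ℂ))⁻¹ * η * starRingEnd ℂ z)) =
        act (hopfSection r η) := by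
    funext z
    simp only [act, hopfSection, h_sqrt]
  have hr0 : (hopfSection r η).1 ≠ 0 := Complex.ofReal_ne_zero.mpr hr.ne'
  rw [h_act, ← hopf_hopfSection hy hr hr2]
  exact hopf_fiber_eq_act_image_S1 (hopfSection_mem_S3 hy hr hr2) hr0

end
end

section
/- For any y ∈ S² with base point s_y ∈ π⁻¹(y) and ι_y : S¹ → π⁻¹(y), z ↦ s_y·z, the pullback under ι_y of the restrictions to π⁻¹(y) of polynomials of degree ≤ t on ℝ⁴ ≅ ℂ² equals the space of restrictions to S¹ of polynomials of degree ≤ t on ℝ² ≅ ℂ: ι_y^*(P_t(S³)|_{π⁻¹(y)}) = P_t(S¹). -/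
open MeasureTheory Complex

noncomputable section

/-! In real coordinates `z ↦ s·z` is an `ℝ`-linear map `ℝ² → ℝ⁴`, and for `s ≠ 0` it has a
linear left inverse: `z = s.1⁻¹ (s.1 z)` or `z = conj (s.2⁻¹ (s.2 z̄))`. Substituting linear
forms into a polynomial does not raise its total degree, so pulling back along the map and
along its left inverse both preserve polynomials of degree `≤ t`. -/

open MvPolynomial

theorem totalDegree_bind₁_le_of_totalDegree_le_one {σ τ R : Type*} [CommSemiring R]
    {L : σ → MvPolynomial τ R} (hL : ∀ i, (L i).totalDegree ≤ 1) (p : MvPolynomial σ R) :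
    (bind₁ L p).totalDegree ≤ p.totalDegree := by
  conv_lhs => rw [p.as_sum, map_sum]
  refine totalDegree_finsetSum_le fun d hd => ?_
  rw [bind₁_monomial]
  calc (C (p.coeff d) * ∏ i ∈ d.support, L i ^ d i).totalDegree
      ≤ ∑ i ∈ d.support, d i * (L i).totalDegree := by
        refine (totalDegree_mul _ _).trans ?_
        rw [totalDegree_C, zero_add]
        exact (totalDegree_finsetProd _ _).trans (Finset.sum_le_sum fun i _ => totalDegree_pow _ _)
    _ ≤ ∑ i ∈ d.support, d i :=
        Finset.sum_le_sum fun i _ => by simpa using Nat.mul_le_mul_left (d i) (hL i)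
    _ ≤ p.totalDegree := le_totalDegree hd

section AffineChange

variable {A B σ τ R : Type*} [CommSemiring R]

def AffineIn (u : A → σ → R) (w : A → τ → R) : Prop :=
  ∃ L : σ → MvPolynomial τ R, (∀ i, (L i).totalDegree ≤ 1) ∧ ∀ a i, u a i = eval (w a) (L i)

theorem AffineIn.comp {u : A → σ → R} {w : A → τ → R} (h : AffineIn u w) (f : B → A) :
    AffineIn (u ∘ f) (w ∘ f) :=
  let ⟨L, hL, hu⟩ := h
  ⟨L, hL, fun b => hu (f b)⟩

def polyFunctions (u : A → σ → R) (t : ℕ) : Set (A → R) :=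
  {g | ∃ p : MvPolynomial σ R, p.totalDegree ≤ t ∧ ∀ a, g a = eval (u a) p}

theorem polyFunctions_subset_of_affineIn {u : A → σ → R} {w : A → τ → R} (h : AffineIn u w)
    (t : ℕ) : polyFunctions u t ⊆ polyFunctions w t := by
  obtain ⟨L, hL, hu⟩ := h
  rintro g ⟨p, hp, hg⟩
  refine ⟨bind₁ L p, (totalDegree_bind₁_le_of_totalDegree_le_one hL p).trans hp, fun a => ?_⟩
  have hv : u a = fun i => eval (w a) (L i) := funext (hu a)
  rw [hg, hv]
  exact (eval₂Hom_bind₁ (RingHom.id R) (w a) L p).symm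

end AffineChange

def realLinForm {σ : Type*} (α β : ℝ) (i j : σ) : MvPolynomial σ ℂ :=
  C (α : ℂ) * X i + C (β : ℂ) * X j

theorem totalDegree_realLinForm_le {σ : Type*} (α β : ℝ) (i j : σ) :
    (realLinForm α β i j).totalDegree ≤ 1 :=
  (totalDegree_add _ _).trans <| max_le
    ((totalDegree_mul _ _).trans (by simp)) ((totalDegree_mul _ _).trans (by simp))

@[simp]
theorem eval_realLinForm {σ : Type*} (v : σ → ℂ) (α β : ℝ) (i j : σ) :
    eval v (realLinForm α β i j) = α * v i + β * v j := by
  simp [realLinForm]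

theorem ne_zero_of_mem_S3 {s : ℂ × ℂ} (hs : s ∈ S3) : s ≠ 0 := by
  rintro rfl
  simp [S3] at hs

theorem affineIn_coords4_act (s : ℂ × ℂ) :
    AffineIn (fun z i => ((coords4 (act s z) i : ℝ) : ℂ)) (fun z i => ((coords2 z i : ℝ) : ℂ)) := by
  refine ⟨![realLinForm s.1.re (-s.1.im) 0 1, realLinForm s.1.im s.1.re 0 1,
      realLinForm s.2.re s.2.im 0 1, realLinForm s.2.im (-s.2.re) 0 1],
    fun i => by fin_cases i <;> apply totalDegree_realLinForm_le, fun z i => ?_⟩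
  fin_cases i <;>
    simp only [coords4, coords2, act, eval_realLinForm, mul_re, mul_im, conj_re, conj_im,
      Matrix.cons_val_zero, Matrix.cons_val_one, Matrix.cons_val, Matrix.cons_val_fin_one,
      Fin.isValue, Fin.zero_eta, Fin.mk_one, Fin.reduceFinMk] <;> push_cast <;> ring

theorem affineIn_coords2_of_fst_ne_zero {s : ℂ × ℂ} (h : s.1 ≠ 0) :
    AffineIn (fun z i => ((coords2 z i : ℝ) : ℂ)) (fun z i => ((coords4 (act s z) i : ℝ) : ℂ)) := by
  set w := s.1⁻¹
  refine ⟨![realLinForm w.re (-w.im) 0 1, realLinForm w.im w.re 0 1],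
    fun i => by fin_cases i <;> apply totalDegree_realLinForm_le, fun z i => ?_⟩
  have hz : z = w * (s.1 * z) := (inv_mul_cancel_left₀ h z).symm
  fin_cases i <;> (conv_lhs => rw [hz]) <;>
    simp only [coords4, coords2, act, eval_realLinForm, mul_re, mul_im, conj_re, conj_im,
      Matrix.cons_val_zero, Matrix.cons_val_one, Matrix.cons_val_fin_one, Fin.isValue,
      Fin.zero_eta, Fin.mk_one] <;> push_cast <;> ring

theorem affineIn_coords2_of_snd_ne_zero {s : ℂ × ℂ} (h : s.2 ≠ 0) :
    AffineIn (fun z i => ((coords2 z i : ℝ) : ℂ)) (fun z i => ((coords4 (act s z) i : ℝ) : ℂ)) := by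
  set w := s.2⁻¹
  refine ⟨![realLinForm w.re (-w.im) 2 3, realLinForm (-w.im) (-w.re) 2 3],
    fun i => by fin_cases i <;> apply totalDegree_realLinForm_le, fun z i => ?_⟩
  have hz : z = starRingEnd ℂ (w * (s.2 * starRingEnd ℂ z)) := by
    rw [inv_mul_cancel_left₀ h, Complex.conj_conj]
  fin_cases i <;> (conv_lhs => rw [hz]) <;>
    simp only [coords4, coords2, act, eval_realLinForm, mul_re, mul_im, conj_re, conj_im,
      Matrix.cons_val_zero, Matrix.cons_val_one, Matrix.cons_val, Matrix.cons_val_fin_one,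
      Fin.isValue, Fin.zero_eta, Fin.mk_one] <;> push_cast <;> ring

theorem affineIn_coords2_of_ne_zero {s : ℂ × ℂ} (hs : s ≠ 0) :
    AffineIn (fun z i => ((coords2 z i : ℝ) : ℂ)) (fun z i => ((coords4 (act s z) i : ℝ) : ℂ)) := by
  by_cases h : s.1 = 0
  · exact affineIn_coords2_of_snd_ne_zero fun h2 => hs (Prod.ext h h2)
  · exact affineIn_coords2_of_fst_ne_zero h

/-- For `y ∈ S²` with base point `s ∈ π⁻¹(y)` and `ι_y : z ↦ s·z`, the
pullback under `ι_y` of restrictions to the fiber of polynomials of degree ≤ t on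
`ℝ⁴ ≅ ℂ²` equals the restrictions to `S¹` of polynomials of degree ≤ t on `ℝ² ≅ ℂ`:
`ι_y^*(P_t(S³)|_{π⁻¹(y)}) = P_t(S¹)`. -/
theorem pullback_fiber_polynomials (t : ℕ) (s : ℂ × ℂ) (hs : s ∈ S3) :
    {g : ↥S1 → ℂ | ∃ p : MvPolynomial (Fin 4) ℂ, p.totalDegree ≤ t ∧
        ∀ z : ↥S1, g z = polyFun4 p (act s z.1)} =
    {g : ↥S1 → ℂ | ∃ q : MvPolynomial (Fin 2) ℂ, q.totalDegree ≤ t ∧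
        ∀ z : ↥S1, g z = polyFun2 q z.1} :=
  (polyFunctions_subset_of_affineIn ((affineIn_coords4_act s).comp Subtype.val) t).antisymm
    (polyFunctions_subset_of_affineIn
      ((affineIn_coords2_of_ne_zero (ne_zero_of_mem_S3 hs)).comp Subtype.val) t)

end
end

section
/- For the monomial f_{i,j,k,l}(a,b) = a^i ā^j b^k b̄^l on S³ and any y ∈ S², the fiber integral satisfies (I_π f_{i,j,k,l})(y) = 0 whenever i + l ≠ j + k, and when i+l = j+k = m with n = i+j+k+l = 2m, (I_π f_{i,j,k,l})(y) equals 2^{−m}(1+ξ)^{i−k} η^k η̄^{m−i} if i ≥ k and 2^{−m}(1−ξ)^{k−i} η^i η̄^{m−k} if i ≤ k, for y = (ξ,η) ∈ S²; in particular I_π f_{i,j,k,l} ∈ P_{⌊n/2⌋}(S²). -/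
/-!
The fiber through `p` is the orbit `z ↦ p·z`, along which the monomial `aⁱ āʲ bᵏ b̄ˡ` picks up
the factor `z^(i+l) z̄^(j+k)`. Arc length on `S¹` is rotation invariant, so these characters
average to `1` if `i + l = j + k` and to `0` otherwise. In the balanced case the monomial is a
product of the `S¹`-invariants `a ā = (1+ξ)/2`, `b b̄ = (1-ξ)/2`, `a b = η/2` and `ā b̄ = η̄/2`,
each of degree one in `(ξ, η)`. Swapping `a` and `b` replaces `ξ` by `-ξ` and exchanges the cases
`k ≤ i` and `i ≤ k`.
-/

open MeasureTheory Complex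

noncomputable section

open Metric Set ComplexConjugate MvPolynomial
open scoped Pointwise

theorem MeasureTheory.Measure.map_coe_toSphere_apply {E : Type*} [NormedAddCommGroup E]
    [NormedSpace ℝ E] [MeasurableSpace E] [BorelSpace E] (μ : Measure E) {t : Set E}
    (ht : MeasurableSet t) :
    μ.toSphere.map (↑) t = Module.finrank ℝ E * μ (Ioo (0 : ℝ) 1 • (t ∩ sphere 0 1)) := by
  rw [Measure.map_apply measurable_subtype_coe ht, μ.toSphere_apply' (measurable_subtype_coe ht),
    Subtype.image_preimage_coe, inter_comm]

theorem MeasureTheory.Measure.map_linearIsometryEquiv_map_coe_toSphere {E : Type*}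
    [NormedAddCommGroup E] [InnerProductSpace ℝ E] [FiniteDimensional ℝ E] [MeasurableSpace E]
    [BorelSpace E] (e : E ≃ₗᵢ[ℝ] E) :
    ((volume : Measure E).toSphere.map (↑)).map e = (volume : Measure E).toSphere.map (↑) := by
  ext t ht
  have hpre : Ioo (0 : ℝ) 1 • (e ⁻¹' t ∩ sphere 0 1) =
      e.toMeasurableEquiv ⁻¹' (Ioo (0 : ℝ) 1 • (t ∩ sphere 0 1)) := by
    ext x
    simp only [mem_preimage, mem_smul, mem_inter_iff, mem_sphere_zero_iff_norm,
      LinearIsometryEquiv.coe_toMeasurableEquiv]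
    constructor
    · rintro ⟨r, hr, y, ⟨hyt, hy⟩, rfl⟩
      exact ⟨r, hr, e y, ⟨hyt, by simpa using hy⟩, by simp⟩
    · rintro ⟨r, hr, y, ⟨hyt, hy⟩, hx⟩
      refine ⟨r, hr, e.symm y, ⟨by simpa using hyt, by simpa using hy⟩, ?_⟩
      rw [← map_smul, hx, LinearIsometryEquiv.symm_apply_apply]
  rw [Measure.map_apply e.continuous.measurable ht, Measure.map_coe_toSphere_apply _ ht,
    Measure.map_coe_toSphere_apply _ (e.continuous.measurable ht), hpre,
    e.measurePreserving.measure_preimage_equiv]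

instance isProbabilityMeasure_mnormalize {V : Type} [MeasurableSpace V] (μ : Measure V)
    [IsFiniteMeasure μ] [NeZero μ] : IsProbabilityMeasure (mnormalize μ) :=
  ⟨by rw [mnormalize, Measure.smul_apply, smul_eq_mul,
    ENNReal.inv_mul_cancel (Measure.measure_univ_ne_zero.2 (NeZero.ne μ))
      (measure_ne_top μ univ)]⟩

namespace μS1

instance : IsFiniteMeasure μS1 := by
  unfold μS1; infer_instance

instance : NeZero μS1 :=
  ⟨(Measure.map_ne_zero_iff measurable_subtype_coe.aemeasurable).2 (Measure.toSphere_ne_zero _)⟩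

theorem ae_norm_eq_one : ∀ᵐ z ∂(mnormalize μS1), ‖z‖ = 1 := by
  refine Measure.ae_smul_measure ?_ _
  exact (ae_map_iff measurable_subtype_coe.aemeasurable
    (isClosed_eq continuous_norm continuous_const).measurableSet).2
    (ae_of_all _ fun z => norm_eq_of_mem_sphere z)

theorem map_mul_left {w : ℂ} (hw : ‖w‖ = 1) : μS1.map (w * ·) = μS1 := by
  have hrot : ⇑(rotation ⟨w, mem_sphere_zero_iff_norm.2 hw⟩) = (w * ·) :=
    funext fun z => rotation_apply _ z
  rw [← hrot]
  exact Measure.map_linearIsometryEquiv_map_coe_toSphere _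

theorem integral_comp_mul_left {w : ℂ} (hw : ‖w‖ = 1) (f : ℂ → ℂ) :
    ∫ z, f (w * z) ∂(mnormalize μS1) = ∫ z, f z ∂(mnormalize μS1) := by
  have hw0 : w ≠ 0 := by rintro rfl; simp at hw
  rw [← (measurableEmbedding_mulLeft₀ hw0).integral_map, mnormalize, Measure.map_smul,
    map_mul_left hw]

theorem exists_norm_eq_one_pow_mul_conj_pow_eq_neg_one {p q : ℕ} (hpq : p ≠ q) :
    ∃ w : ℂ, ‖w‖ = 1 ∧ w ^ p * conj w ^ q = -1 := by
  have hpq' : (p : ℂ) - q ≠ 0 := sub_ne_zero.2 (by exact_mod_cast hpq)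
  refine ⟨exp ((Real.pi / (p - q) : ℝ) * I), norm_exp_ofReal_mul_I _, ?_⟩
  rw [← exp_conj, ← exp_nat_mul, ← exp_nat_mul, ← exp_add]
  convert exp_pi_mul_I using 2
  simp only [map_mul, conj_ofReal, conj_I]
  push_cast
  field_simp
  ring

theorem integral_pow_mul_conj_pow (p q : ℕ) :
    ∫ z, z ^ p * conj z ^ q ∂(mnormalize μS1) = if p = q then 1 else 0 := by
  split_ifs with hpq
  · subst hpq
    calc ∫ z, z ^ p * conj z ^ p ∂(mnormalize μS1) = ∫ _, (1 : ℂ) ∂(mnormalize μS1) := by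
          refine integral_congr_ae ?_
          filter_upwards [ae_norm_eq_one] with z hz
          rw [← mul_pow, mul_conj, normSq_eq_norm_sq, hz]
          simp
      _ = 1 := by simp
  · obtain ⟨w, hw, hwpq⟩ := exists_norm_eq_one_pow_mul_conj_pow_eq_neg_one hpq
    have h := integral_comp_mul_left hw (fun z => z ^ p * conj z ^ q)
    simp only [map_mul, mul_pow, mul_mul_mul_comm _ _ (conj w ^ q), hwpq, neg_one_mul,
      integral_neg] at h
    linear_combination -h / 2

end μS1

theorem measurable_act (p : ℂ × ℂ) : Measurable (act p) := by
  unfold act; fun_prop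

theorem monomial_act (i j k l : ℕ) (p : ℂ × ℂ) (z : ℂ) :
    (act p z).1 ^ i * conj (act p z).1 ^ j * (act p z).2 ^ k * conj (act p z).2 ^ l =
      p.1 ^ i * conj p.1 ^ j * p.2 ^ k * conj p.2 ^ l * (z ^ (i + l) * conj z ^ (j + k)) := by
  simp only [act, map_mul, conj_conj]
  ring

theorem integral_monomial_μfiber (i j k l : ℕ) (p : ℂ × ℂ) :
    ∫ x, x.1 ^ i * conj x.1 ^ j * x.2 ^ k * conj x.2 ^ l ∂(μfiber p) =
      p.1 ^ i * conj p.1 ^ j * p.2 ^ k * conj p.2 ^ l * if i + l = j + k then 1 else 0 := by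
  rw [μfiber, integral_map (measurable_act p).aemeasurable (by fun_prop)]
  simp only [monomial_act, integral_const_mul, μS1.integral_pow_mul_conj_pow]

section Hopf

variable {p : ℂ × ℂ} {ξ : ℝ} {η : ℂ}

theorem fst_mul_conj_of_hopf (hp : p ∈ S3) (h : hopf p = (ξ, η)) :
    p.1 * conj p.1 = ((1 + ξ : ℝ) : ℂ) / 2 := by
  have hξ : ‖p.1‖ ^ 2 - ‖p.2‖ ^ 2 = ξ := congrArg Prod.fst h
  have hp' : ‖p.1‖ ^ 2 + ‖p.2‖ ^ 2 = 1 := hp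
  have hnorm : ‖p.1‖ ^ 2 = (1 + ξ) / 2 := by linarith
  rw [mul_conj, normSq_eq_norm_sq, hnorm]
  push_cast
  ring

theorem fst_mul_snd_of_hopf (h : hopf p = (ξ, η)) : p.1 * p.2 = η / 2 := by
  have hη : 2 * p.1 * p.2 = η := congrArg Prod.snd h
  linear_combination hη / 2

theorem swap_mem_S3 (hp : p ∈ S3) : p.swap ∈ S3 := by
  simpa [S3, add_comm] using hp

theorem hopf_swap (h : hopf p = (ξ, η)) : hopf p.swap = (-ξ, η) := by
  simp only [hopf, Prod.fst_swap, Prod.snd_swap, Prod.mk.injEq] at h ⊢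
  exact ⟨by rw [← h.1]; ring, by rw [← h.2]; ring⟩

theorem monomial_eq_of_hopf_of_le (hp : p ∈ S3) (h : hopf p = (ξ, η)) {i j k l m : ℕ}
    (hil : i + l = m) (hjk : j + k = m) (hki : k ≤ i) :
    p.1 ^ i * conj p.1 ^ j * p.2 ^ k * conj p.2 ^ l =
      2⁻¹ ^ m * ((1 + ξ : ℝ) : ℂ) ^ (i - k) * η ^ k * conj η ^ (m - i) := by
  obtain ⟨e, rfl⟩ : ∃ e, i = k + e := ⟨i - k, by omega⟩
  obtain rfl : j = e + l := by omega
  subst hil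
  rw [show k + e - k = e by omega, show k + e + l - (k + e) = l by omega]
  calc p.1 ^ (k + e) * conj p.1 ^ (e + l) * p.2 ^ k * conj p.2 ^ l
      = (p.1 * conj p.1) ^ e * (p.1 * p.2) ^ k * conj (p.1 * p.2) ^ l := by
        simp only [map_mul]; ring
    _ = _ := by
        rw [fst_mul_conj_of_hopf hp h, fst_mul_snd_of_hopf h, map_div₀, map_ofNat]
        ring

theorem monomial_eq_of_hopf_of_ge (hp : p ∈ S3) (h : hopf p = (ξ, η)) {i j k l m : ℕ}
    (hil : i + l = m) (hjk : j + k = m) (hik : i ≤ k) :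
    p.1 ^ i * conj p.1 ^ j * p.2 ^ k * conj p.2 ^ l =
      2⁻¹ ^ m * ((1 - ξ : ℝ) : ℂ) ^ (k - i) * η ^ i * conj η ^ (m - k) := by
  have hswap := monomial_eq_of_hopf_of_le (swap_mem_S3 hp) (hopf_swap h)
    (i := k) (j := l) (k := i) (l := j) (m := m) (by omega) (by omega) hik
  simp only [Prod.fst_swap, Prod.snd_swap, ← sub_eq_add_neg] at hswap
  rw [← hswap]
  ring

theorem integral_monomial_μfiber_of_le (hp : p ∈ S3) (h : hopf p = (ξ, η)) {i j k l m : ℕ}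
    (hil : i + l = m) (hjk : j + k = m) (hki : k ≤ i) :
    ∫ x, x.1 ^ i * conj x.1 ^ j * x.2 ^ k * conj x.2 ^ l ∂(μfiber p) =
      2⁻¹ ^ m * ((1 + ξ : ℝ) : ℂ) ^ (i - k) * η ^ k * conj η ^ (m - i) := by
  rw [integral_monomial_μfiber, if_pos (by omega), mul_one,
    monomial_eq_of_hopf_of_le hp h hil hjk hki]

theorem integral_monomial_μfiber_of_ge (hp : p ∈ S3) (h : hopf p = (ξ, η)) {i j k l m : ℕ}
    (hil : i + l = m) (hjk : j + k = m) (hik : i ≤ k) :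
    ∫ x, x.1 ^ i * conj x.1 ^ j * x.2 ^ k * conj x.2 ^ l ∂(μfiber p) =
      2⁻¹ ^ m * ((1 - ξ : ℝ) : ℂ) ^ (k - i) * η ^ i * conj η ^ (m - k) := by
  rw [integral_monomial_μfiber, if_pos (by omega), mul_one,
    monomial_eq_of_hopf_of_ge hp h hil hjk hik]

end Hopf

theorem exists_totalDegree_le_polyFun3_eq (c σ : ℂ) (e a b : ℕ) :
    ∃ q : MvPolynomial (Fin 3) ℂ, q.totalDegree ≤ e + a + b ∧
      ∀ y, polyFun3 q y = c * (1 + σ * y.1) ^ e * y.2 ^ a * conj y.2 ^ b := by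
  have hpow : ∀ (f : MvPolynomial (Fin 3) ℂ) (n : ℕ),
      f.totalDegree ≤ 1 → (f ^ n).totalDegree ≤ n :=
    fun f n hf => (totalDegree_pow f n).trans (by simpa using Nat.mul_le_mul_left n hf)
  have hCX : ∀ (u : ℂ) (r : Fin 3), (C u * X r : MvPolynomial (Fin 3) ℂ).totalDegree ≤ 1 :=
    fun u r => (totalDegree_mul _ _).trans (by simp [totalDegree_X])
  have hξ : (1 + C σ * X 0 : MvPolynomial (Fin 3) ℂ).totalDegree ≤ 1 :=
    (totalDegree_add _ _).trans (max_le (by simp) (hCX _ _))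
  have hη : ∀ u : ℂ, (X 1 + C u * X 2 : MvPolynomial (Fin 3) ℂ).totalDegree ≤ 1 :=
    fun u => (totalDegree_add _ _).trans (max_le (by simp [totalDegree_X]) (hCX _ _))
  refine ⟨C c * (1 + C σ * X 0) ^ e * (X 1 + C I * X 2) ^ a * (X 1 + C (-I) * X 2) ^ b, ?_, ?_⟩
  · refine (totalDegree_mul _ _).trans (add_le_add ((totalDegree_mul _ _).trans
      (add_le_add ((totalDegree_mul _ _).trans ?_) (hpow _ a (hη _)))) (hpow _ b (hη _)))
    simpa using hpow _ e hξ
  · intro y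
    have hy : (y.2.re : ℂ) + I * y.2.im = y.2 := by rw [mul_comm, re_add_im]
    have hy' : (y.2.re : ℂ) + -(I * y.2.im) = conj y.2 := by
      apply Complex.ext <;> simp
    simp [polyFun3, coords3, hy, hy']

/-- Fiber integrals of the monomials `f_{i,j,k,l}(a,b) = aⁱ āʲ bᵏ b̄ˡ`:
they vanish unless `i+l = j+k`, in the balanced case `i+l = j+k = m` they are given by the
stated explicit formulas in `(ξ,η)`, and in particular `I_π f_{i,j,k,l}` is (the
restriction to `S²` of) a polynomial of degree at most `⌊(i+j+k+l)/2⌋`. -/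
theorem fiber_integral_monomial (i j k l : ℕ)
    (s : (ℝ × ℂ) → ℂ × ℂ) (hs : ∀ y ∈ S2, s y ∈ S3 ∧ hopf (s y) = y) :
    (∀ y ∈ S2, i + l ≠ j + k →
      ∫ x, x.1 ^ i * (starRingEnd ℂ x.1) ^ j * x.2 ^ k * (starRingEnd ℂ x.2) ^ l ∂(μfiber (s y)) = 0) ∧
    (∀ ξ : ℝ, ∀ η : ℂ, (ξ, η) ∈ S2 → ∀ m : ℕ, i + l = m → j + k = m →
      (k ≤ i →
        ∫ x, x.1 ^ i * (starRingEnd ℂ x.1) ^ j * x.2 ^ k * (starRingEnd ℂ x.2) ^ l ∂(μfiber (s (ξ, η))) =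
          ((2 : ℂ))⁻¹ ^ m * (((1 + ξ : ℝ)) : ℂ) ^ (i - k) * η ^ k *
            (starRingEnd ℂ η) ^ (m - i)) ∧
      (i ≤ k →
        ∫ x, x.1 ^ i * (starRingEnd ℂ x.1) ^ j * x.2 ^ k * (starRingEnd ℂ x.2) ^ l ∂(μfiber (s (ξ, η))) =
          ((2 : ℂ))⁻¹ ^ m * (((1 - ξ : ℝ)) : ℂ) ^ (k - i) * η ^ i *
            (starRingEnd ℂ η) ^ (m - k))) ∧
    (∃ q : MvPolynomial (Fin 3) ℂ, q.totalDegree ≤ (i + j + k + l) / 2 ∧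
      ∀ y ∈ S2, ∫ x, x.1 ^ i * (starRingEnd ℂ x.1) ^ j * x.2 ^ k * (starRingEnd ℂ x.2) ^ l ∂(μfiber (s y)) = polyFun3 q y) := by
  have hfiber := fun y => integral_monomial_μfiber i j k l (s y)
  refine ⟨fun y _ hne => by rw [hfiber, if_neg hne, mul_zero], fun ξ η hy m hil hjk =>
    ⟨integral_monomial_μfiber_of_le (hs _ hy).1 (hs _ hy).2 hil hjk,
      integral_monomial_μfiber_of_ge (hs _ hy).1 (hs _ hy).2 hil hjk⟩, ?_⟩
  by_cases hbal : i + l = j + k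
  · rcases le_total k i with hki | hik
    · obtain ⟨q, hdeg, hq⟩ :=
        exists_totalDegree_le_polyFun3_eq ((2 : ℂ)⁻¹ ^ (i + l)) 1 (i - k) k (i + l - i)
      refine ⟨q, hdeg.trans (by omega), fun ⟨ξ, η⟩ hy => ?_⟩
      rw [integral_monomial_μfiber_of_le (hs _ hy).1 (hs _ hy).2 rfl hbal.symm hki, hq]
      push_cast
      ring
    · obtain ⟨q, hdeg, hq⟩ :=
        exists_totalDegree_le_polyFun3_eq ((2 : ℂ)⁻¹ ^ (i + l)) (-1) (k - i) i (i + l - k)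
      refine ⟨q, hdeg.trans (by omega), fun ⟨ξ, η⟩ hy => ?_⟩
      rw [integral_monomial_μfiber_of_ge (hs _ hy).1 (hs _ hy).2 rfl hbal.symm hik, hq]
      push_cast
      ring
  · exact ⟨0, by simp, fun y _ => by rw [hfiber, if_neg hbal, mul_zero, polyFun3, map_zero]⟩
end
end
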